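/- arXiv:2001.08128 — 4 statements merged into one kernel-verified Lean document; each statement's English description precedes it below -/
import Mathlib

section
/- Wielandt's subnormality criterion restated: a subgroup H of a finite group G is subnormal in G if and only if S_G(H) = G, where S_G(H) = {g ∈ G : H is subnormal in ⟨H, g⟩}. -/
open Subgroup

variable {G : Type*} [Group G]

/-- `Subnormal H K` means there is a chain `H = c 0 ⊴ c 1 ⊴ ⋯ ⊴ c n = K` of
subgroups, each normal in the next. -/
def Subnormal (H K : Subgroup G) : Prop :=
  ∃ (n : ℕ) (c : ℕ → Subgroup G), c 0 = H ∧ c n = K ∧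
    ∀ i < n, c i ≤ c (i + 1) ∧ ∀ x ∈ c (i + 1), ∀ h ∈ c i, x * h * x⁻¹ ∈ c i

/-- Wielandt's subnormalizer of a subgroup `H` of `G`:
the set of `g ∈ G` such that `H` is subnormal in `⟨H, g⟩`. -/
def subnormalizerSet (H : Subgroup G) : Set G :=
  {g : G | Subnormal H (H ⊔ zpowers g)}


/-!
Everything is well-founded induction on subgroups of a finite group.

Join theorem: let `A ≠ K` and `B` be subnormal in `K`, so that `M`, the normal closure of `A`
in `K`, is proper. If some `b ∈ B` moves `A`, then `A ⊔ A^b` is subnormal in `M` by induction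
on `K`, and it replaces `A` by a larger subnormal subgroup with the same join with `B`. If `B`
normalizes `A`, then either `M ⊔ B < K` and induction on `K` applies, or `M ⊔ B = K` normalizes
the normal closure of `A` in `M`, which is then `M`, so `A = M` is normal in `K`.

Zipper lemma: if `S` is subnormal in every proper subgroup of `K` containing it but not in `K`,
then every maximal subgroup `L ⊇ S` of `K` is the one containing `N_K(S)`. A minimal `T` with
`S < T ≤ L` inheriting the hypothesis normalizes `S`, since the normal closure of `S` in `T`
inherits it too (by the join theorem); induction on `S` applied to `T` gives the claim.

Criterion: in a minimal counterexample `H` is subnormal in every proper subgroup containing it,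
so each `⟨H, g⟩` is proper, hence lies in the unique maximal subgroup over `H`, which would then
be all of `G`.
-/

open scoped Pointwise

lemma Subgroup.le_normalizer_iff_conj_mem {H K : Subgroup G} :
    K ≤ normalizer H ↔ ∀ k ∈ K, ∀ h ∈ H, k * h * k⁻¹ ∈ H := by
  refine ⟨fun hK k hk h hh => (mem_normalizer_iff.mp (hK hk) h).mp hh, fun hK k hk => ?_⟩
  refine mem_normalizer_iff.mpr fun h => ⟨hK k hk h, fun hkh => ?_⟩
  simpa [mul_assoc] using hK k⁻¹ (inv_mem hk) _ hkh

lemma Subgroup.conj_smul_eq_self_iff {H : Subgroup G} {g : G} :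
    MulAut.conj g • H = H ↔ g ∈ normalizer H := by
  rw [mem_normalizer_iff_map_conj_eq, pointwise_smul_def]
  rfl

lemma Subgroup.le_normalizer_of_conj_smul_le {H K : Subgroup G}
    (h : ∀ k ∈ K, MulAut.conj k • H ≤ H) : K ≤ normalizer H :=
  le_normalizer_iff_conj_mem.mpr fun k hk x hx =>
    h k hk ((mem_smul_pointwise_iff_exists _ _ _).mpr ⟨x, hx, rfl⟩)

namespace Subnormal

variable {H K L : Subgroup G}

protected lemma refl (H : Subgroup G) : Subnormal H H :=
  ⟨0, fun _ => H, rfl, rfl, by simp⟩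

lemma cons (hHL : H ≤ L) (hL : L ≤ normalizer H) (h : Subnormal L K) : Subnormal H K := by
  obtain ⟨n, c, rfl, hcn, hc⟩ := h
  refine ⟨n + 1, fun | 0 => H | i + 1 => c i, rfl, hcn, ?_⟩
  rintro (_ | i) hi
  · exact ⟨hHL, le_normalizer_iff_conj_mem.mp hL⟩
  · exact hc i (by omega)

@[elab_as_elim]
lemma induction {motive : ∀ H : Subgroup G, Subnormal H K → Prop}
    (top : motive K (Subnormal.refl K))
    (step : ∀ (H L : Subgroup G) (hHL : H ≤ L) (hL : L ≤ normalizer H) (hLK : Subnormal L K),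
      motive L hLK → motive H (hLK.cons hHL hL))
    (h : Subnormal H K) : motive H h := by
  obtain ⟨n, c, rfl, hcn, hc⟩ := h
  induction n generalizing c with
  | zero => subst hcn; exact top
  | succ n ih =>
    have hc' : ∀ i < n, c (i + 1) ≤ c (i + 1 + 1) ∧
        ∀ x ∈ c (i + 1 + 1), ∀ h ∈ c (i + 1), x * h * x⁻¹ ∈ c (i + 1) :=
      fun i hi => hc (i + 1) (by omega)
    exact step _ _ (hc 0 n.succ_pos).1 (le_normalizer_iff_conj_mem.mpr (hc 0 n.succ_pos).2)
      ⟨n, fun i => c (i + 1), rfl, hcn, hc'⟩ (ih (fun i => c (i + 1)) hcn hc')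

lemma of_le_normalizer (hHK : H ≤ K) (hK : K ≤ normalizer H) : Subnormal H K :=
  (Subnormal.refl K).cons hHK hK

lemma le (h : Subnormal H K) : H ≤ K := by
  induction h using Subnormal.induction with
  | top => exact le_rfl
  | step H L hHL _ _ ih => exact hHL.trans ih

lemma trans (h₁ : Subnormal H K) (h₂ : Subnormal K L) : Subnormal H L := by
  induction h₁ using Subnormal.induction with
  | top => exact h₂
  | step H M hHM hM _ ih => exact ih.cons hHM hM

lemma map {G' : Type*} [Group G'] (h : Subnormal H K) (f : G →* G') :
    Subnormal (H.map f) (K.map f) := by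
  induction h using Subnormal.induction with
  | top => exact Subnormal.refl _
  | step H L hHL hL _ ih => exact ih.cons (map_mono hHL) ((map_mono hL).trans (le_normalizer_map f))

lemma conj_smul (h : Subnormal H K) (g : G) :
    Subnormal (MulAut.conj g • H) (MulAut.conj g • K) := by
  simpa only [pointwise_smul_def] using h.map _

lemma inf_right (h : Subnormal H K) (L : Subgroup G) : Subnormal (H ⊓ L) (K ⊓ L) := by
  induction h using Subnormal.induction with
  | top => exact Subnormal.refl _
  | step H M hHM hM _ ih =>
    exact ih.cons (inf_le_inf_right L hHM)
      ((inf_le_inf hM le_normalizer).trans inf_normalizer_le_normalizer_inf)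

lemma of_le (h : Subnormal H K) (hHL : H ≤ L) (hLK : L ≤ K) : Subnormal H L := by
  simpa [inf_eq_left.mpr hHL, inf_eq_right.mpr hLK] using h.inf_right L

lemma sup_left_of_le_normalizer {N : Subgroup G} (hNK : N ≤ K) (hN : K ≤ normalizer N)
    (h : Subnormal H K) : Subnormal (N ⊔ H) K := by
  induction h using Subnormal.induction with
  | top => simpa [sup_eq_right.mpr hNK] using Subnormal.refl K
  | step H L hHL hL hLK ih =>
    refine ih.cons (sup_le_sup_left hHL N) (sup_le (le_sup_left.trans le_normalizer) ?_)
    exact (le_inf (hLK.le.trans hN) hL).trans (normalizer_inf_normalizer_le_normalizer_sup N H)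

end Subnormal

def normalClosureIn (A K : Subgroup G) : Subgroup G :=
  ⨆ k : K, MulAut.conj (k : G) • A

section normalClosureIn

variable {A K Y : Subgroup G}

lemma conj_smul_le_normalClosureIn {k : G} (hk : k ∈ K) :
    MulAut.conj k • A ≤ normalClosureIn A K :=
  le_iSup_of_le ⟨k, hk⟩ le_rfl

lemma le_normalClosureIn (A K : Subgroup G) : A ≤ normalClosureIn A K := by
  simpa using conj_smul_le_normalClosureIn (A := A) (one_mem K)

lemma normalClosureIn_mono_left {A' : Subgroup G} (h : A ≤ A') :
    normalClosureIn A K ≤ normalClosureIn A' K :=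
  iSup_mono fun _ => pointwise_smul_le_pointwise_smul_iff.mpr h

lemma normalClosureIn_le (hAY : A ≤ Y) (hK : K ≤ normalizer Y) : normalClosureIn A K ≤ Y :=
  iSup_le fun k => (pointwise_smul_le_pointwise_smul_iff.mpr hAY).trans
    (conj_smul_eq_self_iff.mpr (hK k.2)).le

lemma normalClosureIn_le_self (h : A ≤ K) : normalClosureIn A K ≤ K :=
  normalClosureIn_le h le_normalizer

lemma le_normalizer_normalClosureIn : K ≤ normalizer (normalClosureIn A K) := by
  refine le_normalizer_of_conj_smul_le fun k hk => ?_
  rw [pointwise_smul_subset_iff]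
  refine iSup_le fun j => ?_
  rw [subset_pointwise_smul_iff, inv_inv, smul_smul, ← map_mul]
  exact conj_smul_le_normalClosureIn (mul_mem hk j.2)

lemma normalizer_inf_normalizer_le_normalizer_normalClosureIn :
    normalizer A ⊓ normalizer K ≤ normalizer (normalClosureIn A K : Set G) := by
  refine le_normalizer_of_conj_smul_le fun g hg => ?_
  rw [pointwise_smul_subset_iff]
  refine iSup_le fun k => ?_
  have hgk : g * k * g⁻¹ ∈ K := (mem_normalizer_iff.mp hg.2 k).mp k.2
  rw [subset_pointwise_smul_iff, inv_inv, smul_smul, ← map_mul,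
    show g * k = g * k * g⁻¹ * g by group, map_mul, ← smul_smul, conj_smul_eq_self_iff.mpr hg.1]
  exact conj_smul_le_normalClosureIn hgk

lemma Subnormal.eq_of_normalClosureIn_eq (h : Subnormal A K) (hA : normalClosureIn A K = K) :
    A = K := by
  induction h using Subnormal.induction with
  | top => rfl
  | step H L hHL hL hLK ih =>
    have hLK' : L = K := ih <| le_antisymm (normalClosureIn_le_self hLK.le) <|
      hA.symm.le.trans (normalClosureIn_mono_left hHL)
    subst hLK'
    exact le_antisymm hHL (hA.symm.le.trans (normalClosureIn_le le_rfl hL))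

lemma Subnormal.eq_normalClosureIn_of_sup_eq {B : Subgroup G} (hA : Subnormal A K)
    (hBA : B ≤ normalizer A) (hBK : B ≤ K) (h : normalClosureIn A K ⊔ B = K) :
    A = normalClosureIn A K := by
  have hAM : Subnormal A (normalClosureIn A K) :=
    hA.of_le (le_normalClosureIn A K) (normalClosureIn_le_self hA.le)
  have hB : B ≤ normalizer (normalClosureIn A (normalClosureIn A K) : Set G) :=
    (le_inf hBA (hBK.trans le_normalizer_normalClosureIn)).trans
      normalizer_inf_normalizer_le_normalizer_normalClosureIn
  refine hAM.eq_of_normalClosureIn_eq <| le_antisymm (normalClosureIn_le_self hAM.le) <|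
    normalClosureIn_le (le_normalClosureIn A _) <| h.ge.trans <|
      sup_le le_normalizer_normalClosureIn hB

end normalClosureIn

lemma Subnormal.sup [Finite G] {A B K : Subgroup G} (hA : Subnormal A K) (hB : Subnormal B K) :
    Subnormal (A ⊔ B) K := by
  induction K using WellFoundedLT.induction generalizing A B with
  | _ K ihK =>
  induction A using WellFoundedGT.induction with
  | _ A ihA =>
  obtain rfl | hAK := eq_or_ne A K
  · rw [sup_eq_left.mpr hB.le]
    exact .refl A
  set M := normalClosureIn A K
  have hMK : M < K :=
    (normalClosureIn_le_self hA.le).lt_of_ne (mt hA.eq_of_normalClosureIn_eq hAK)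
  have hKM : K ≤ normalizer M := le_normalizer_normalClosureIn
  have hAM : Subnormal A M := hA.of_le (le_normalClosureIn A K) hMK.le
  by_cases hBA : B ≤ normalizer A
  · obtain hMB | hMB := eq_or_ne (M ⊔ B) K
    · have hAM' : A = M := hA.eq_normalClosureIn_of_sup_eq hBA hB.le hMB
      rw [hAM', hMB]
      exact .refl K
    · have hMBK : M ⊔ B < K := (sup_le hMK.le hB.le).lt_of_ne hMB
      exact (ihK _ hMBK (hA.of_le ((le_normalClosureIn A K).trans le_sup_left) hMBK.le)
        (hB.of_le le_sup_right hMBK.le)).trans (hB.sup_left_of_le_normalizer hMK.le hKM)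
  · obtain ⟨b, hb, a, ha, hab⟩ : ∃ b ∈ B, ∃ a ∈ A, b * a * b⁻¹ ∉ A := by
      simpa [le_normalizer_iff_conj_mem] using hBA
    have hbM : MulAut.conj b • M = M := conj_smul_eq_self_iff.mpr (hKM (hB.le hb))
    have hA' : Subnormal (A ⊔ MulAut.conj b • A) K :=
      (ihK M hMK hAM (hbM ▸ hAM.conj_smul b)).trans (of_le_normalizer hMK.le hKM)
    have hAA' : A < A ⊔ MulAut.conj b • A :=
      le_sup_left.lt_of_ne fun h => hab (h ▸ mem_sup_right (smul_mem_pointwise_smul a _ A ha))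
    have hbAB : MulAut.conj b • (A ⊔ B) = A ⊔ B :=
      conj_smul_eq_self_iff.mpr (le_normalizer (mem_sup_right hb))
    have hA'B : A ⊔ MulAut.conj b • A ⊔ B = A ⊔ B :=
      le_antisymm (sup_le (sup_le le_sup_left (hbAB ▸ pointwise_smul_le_pointwise_smul_iff.mpr
        le_sup_left)) le_sup_right) (sup_le_sup_right le_sup_left B)
    exact hA'B ▸ ihA _ hAA' hA'

lemma Subnormal.bot (K : Subgroup G) : Subnormal ⊥ K :=
  of_le_normalizer bot_le (le_top.trans (normalizer_eq_top_iff.mpr normal_bot).ge)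

lemma Subnormal.iSup [Finite G] {ι : Type*} [Finite ι] {H : ι → Subgroup G} {K : Subgroup G}
    (h : ∀ i, Subnormal (H i) K) : Subnormal (⨆ i, H i) K := by
  have := Fintype.ofFinite ι
  rw [← Finset.sup_univ_eq_iSup]
  exact Finset.sup_induction (p := (Subnormal · K)) (Subnormal.bot K)
    (fun _ hA _ hB => hA.sup hB) fun i _ => h i

def SubnormalBelow (S K : Subgroup G) : Prop :=
  ∀ Y, S ≤ Y → Y < K → Subnormal S Y

namespace SubnormalBelow

variable {S K L : Subgroup G}

lemma of_covBy (hL : L ⋖ K) : SubnormalBelow L K := fun Y hLY hYK => by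
  obtain rfl := (hL.eq_or_eq hLY hYK.le).resolve_right hYK.ne
  exact .refl Y

lemma conj_smul (hS : SubnormalBelow S K) {x : G} (hx : x ∈ K) {Y : Subgroup G} (hYK : Y < K)
    (hSY : MulAut.conj x • S ≤ Y) : Subnormal (MulAut.conj x • S) Y := by
  have hxK : (MulAut.conj x)⁻¹ • K = K := by
    rw [inv_smul_eq_iff, conj_smul_eq_self_iff.mpr (le_normalizer hx)]
  have hY : (MulAut.conj x)⁻¹ • Y < K := by
    rw [← hxK, lt_iff_le_not_ge, pointwise_smul_le_pointwise_smul_iff,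
      pointwise_smul_le_pointwise_smul_iff, ← lt_iff_le_not_ge]
    exact hYK
  simpa using (hS _ (pointwise_smul_subset_iff.mp hSY) hY).conj_smul x

lemma normalClosureIn [Finite G] (hS : SubnormalBelow S K) {C : Subgroup G} (hC : C ≤ K) :
    SubnormalBelow (normalClosureIn S C) K := fun _ hY hYK =>
  Subnormal.iSup fun c => hS.conj_smul (hC c.2) hYK ((conj_smul_le_normalClosureIn c.2).trans hY)

lemma exists_lt_le_normalizer [Finite G] (hS : SubnormalBelow S K) (hSL : S < L) (hLK : L < K)
    (hL : SubnormalBelow L K) :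
    ∃ T, S < T ∧ T ≤ L ∧ T ≤ normalizer S ∧ SubnormalBelow T K := by
  obtain ⟨T, ⟨hST, hTL, hT⟩, hmin⟩ := wellFounded_lt.has_min
    {T | S < T ∧ T ≤ L ∧ SubnormalBelow T K} ⟨L, hSL, le_rfl, hL⟩
  refine ⟨T, hST, hTL, ?_, hT⟩
  set R := _root_.normalClosureIn S T
  have hRT : R ≤ T := normalClosureIn_le_self hST.le
  have hR : R = S := by
    by_contra hne
    have hSR : S < R := (le_normalClosureIn S T).lt_of_ne (Ne.symm hne)
    have hRT' : R = T := hRT.eq_of_not_lt fun hlt =>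
      hmin R ⟨hSR, hRT.trans hTL, hS.normalClosureIn (hTL.trans hLK.le)⟩ hlt
    exact hST.ne ((hS T hST.le (hTL.trans_lt hLK)).eq_of_normalClosureIn_eq hRT')
  exact hR ▸ le_normalizer_normalClosureIn

theorem eq_of_covBy [Finite G] {L₁ L₂ : Subgroup G} (hS : SubnormalBelow S K)
    (hSK : ¬ Subnormal S K) (hL₁ : L₁ ⋖ K) (hL₂ : L₂ ⋖ K) (hSL₁ : S ≤ L₁) (hSL₂ : S ≤ L₂) :
    L₁ = L₂ := by
  induction S using WellFoundedGT.induction generalizing L₁ L₂ with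
  | _ S ih =>
  have hN : K ⊓ normalizer S < K := inf_le_left.lt_of_ne fun h =>
    hSK (Subnormal.of_le_normalizer (hSL₁.trans hL₁.le) (inf_eq_left.mp h))
  obtain ⟨Q, hNQ, hQ⟩ := exists_le_covBy_of_lt hN
  suffices key : ∀ L, L ⋖ K → S ≤ L → L = Q from (key L₁ hL₁ hSL₁).trans (key L₂ hL₂ hSL₂).symm
  intro L hL hSL
  obtain rfl | hSL := hSL.eq_or_lt
  · exact ((hL.eq_or_eq ((le_inf hL.le le_normalizer).trans hNQ) hQ.le).resolve_right hQ.ne).symm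
  obtain ⟨T, hST, hTL, hTS, hT⟩ := hS.exists_lt_le_normalizer hSL hL.lt (of_covBy hL)
  have hTK : ¬ Subnormal T K := fun h => hSK ((Subnormal.of_le_normalizer hST.le hTS).trans h)
  exact ih T hST hT hTK hL hQ hTL ((le_inf (hTL.trans hL.le) hTS).trans hNQ)

end SubnormalBelow

theorem subnormal_of_forall_subnormal_sup_zpowers [Finite G] {H K : Subgroup G} (hHK : H ≤ K)
    (h : ∀ g ∈ K, Subnormal H (H ⊔ zpowers g)) : Subnormal H K := by
  induction K using WellFoundedLT.induction with
  | _ K ih =>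
  have hS : SubnormalBelow H K := fun Y hHY hYK => ih Y hYK hHY fun g hg => h g (hYK.le hg)
  by_contra hHK'
  obtain ⟨M, hHM, hM⟩ := exists_le_covBy_of_lt (hHK.lt_of_ne fun e => hHK' (e ▸ .refl H))
  refine hM.lt.not_ge fun g hg => ?_
  have hgK : H ⊔ zpowers g < K :=
    (sup_le hHK (zpowers_le.mpr hg)).lt_of_ne fun e => hHK' (e ▸ h g hg)
  obtain ⟨L, hgL, hL⟩ := exists_le_covBy_of_lt hgK
  rw [← hS.eq_of_covBy hHK' hL hM (le_sup_left.trans hgL) hHM]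
  exact hgL (mem_sup_right (mem_zpowers g))

theorem stmt3 [Finite G] (H : Subgroup G) :
    Subnormal H ⊤ ↔ subnormalizerSet H = Set.univ := by
  rw [Set.eq_univ_iff_forall]
  exact ⟨fun h g => h.of_le le_sup_left le_top,
    fun h => subnormal_of_forall_subnormal_sup_zpowers le_top fun g _ => h g⟩
end

section
/- Let p be a prime and G = PSL(2, p) with p ≥ 5. For a p-element x ≠ 1 of G, the proportion λ_G(x)/n_p(G) of Sylow p-subgroups containing x equals 1/(p+1), and O_p(G) = 1. Hence the bound in the proposition 'λ_G(x)/n_p(G) > 1/(p+1) implies x ∈ O_p(G)' is sharp. -/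
/-!
`PSL(2, p)` has order `p (p² - 1) / 2`, so its Sylow `p`-subgroups have prime order `p` and two
of them meet trivially: a `p`-element `x ≠ 1` lies in exactly one, and `O_p` is trivial as soon
as there are two. The images of `T = [[1, 1], [0, 1]]` and of its conjugate `S T S⁻¹` generate
different Sylow subgroups. Finally `n_p ≡ 1 (mod p)` and `n_p ∣ p² - 1` leave only
`n_p ∈ {1, p + 1}`.
-/

open Subgroup

variable {G : Type*} [Group G]

/-- `O_p(G)`: the `p`-core, i.e. the intersection of all Sylow `p`-subgroups,
which is the largest normal `p`-subgroup of a finite group. -/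
def pCore (p : ℕ) [Fact p.Prime] (G : Type*) [Group G] : Subgroup G :=
  ⨅ P : Sylow p G, (P : Subgroup G)

/-- `λ_G(x)`: the number of Sylow `p`-subgroups of `G` containing `x`. -/
noncomputable def lam (p : ℕ) [Fact p.Prime] (x : G) : ℕ :=
  Nat.card {P : Sylow p G // x ∈ P}

/-- `n_p(G)`: the number of Sylow `p`-subgroups of `G`. -/
noncomputable def np (p : ℕ) [Fact p.Prime] (G : Type*) [Group G] : ℕ :=
  Nat.card (Sylow p G)

theorem Nat.eq_one_or_eq_add_one_of_dvd_sq_sub_one {p d : ℕ} (hp : 1 < p)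
    (hd : d ∣ p ^ 2 - 1) (hmod : d ≡ 1 [MOD p]) : d = 1 ∨ d = p + 1 := by
  have hp2 : 1 < p ^ 2 := Nat.one_lt_pow two_ne_zero hp
  have hdle : d ≤ p ^ 2 - 1 := Nat.le_of_dvd (by omega) hd
  have hd0 : 0 < d := Nat.pos_of_dvd_of_pos hd (by omega)
  obtain ⟨k, hk⟩ : p ∣ d - 1 := (Nat.modEq_iff_dvd' hd0).mp hmod.symm
  replace hk : d = p * k + 1 := by omega
  have hkp : k < p := Nat.lt_of_mul_lt_mul_left (a := p) (by rw [← sq]; omega)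
  -- `d = kp + 1` divides `k² - 1`, which is smaller than `d` unless `k ≤ 1`.
  have hdk : (d : ℤ) ∣ (k : ℤ) ^ 2 - 1 := by
    have hd' : (d : ℤ) ∣ (p : ℤ) ^ 2 - 1 := by
      have := Int.natCast_dvd_natCast.mpr hd
      rwa [Nat.cast_sub hp2.le, Nat.cast_pow, Nat.cast_one] at this
    have hsplit : (k : ℤ) ^ 2 - 1 = (k * p - 1) * d - k ^ 2 * (p ^ 2 - 1) := by
      rw [hk]; push_cast; ring
    rw [hsplit]
    exact (dvd_mul_left _ _).sub (hd'.mul_left _)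
  rcases Nat.lt_or_ge k 2 with hk2 | hk2
  · interval_cases k <;> omega
  · have := Int.le_of_dvd (by nlinarith) hdk
    push_cast [hk] at this
    nlinarith

theorem Nat.not_dvd_of_dvd_sq_sub_one {p m : ℕ} (hp : 1 < p) (hm : m ∣ p ^ 2 - 1) :
    ¬ p ∣ m := fun h ↦ by
  have h1 := Nat.dvd_sub (dvd_pow_self p two_ne_zero) (h.trans hm)
  rw [Nat.sub_sub_self (Nat.one_le_pow _ _ (by omega))] at h1
  exact hp.ne' (Nat.dvd_one.mp h1)

theorem Subgroup.eq_zpowers_of_card_eq_prime {p : ℕ} (hp : p.Prime) {H : Subgroup G}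
    (hH : Nat.card H = p) {g : G} (hgH : g ∈ H) (hg : g ≠ 1) : H = zpowers g := by
  have : Finite H := Nat.finite_of_card_ne_zero (hH ▸ hp.ne_zero)
  have hord : orderOf g = p :=
    (hp.eq_one_or_self_of_dvd _ (hH ▸ H.orderOf_dvd_natCard hgH)).resolve_left
      (orderOf_eq_one_iff.not.mpr hg)
  refine (eq_of_le_of_card_ge (zpowers_le.mpr hgH) ?_).symm
  rw [Nat.card_zpowers, hord, hH]

theorem Sylow.exists_mem_of_orderOf_eq_prime_pow {p n : ℕ} {g : G} (hg : orderOf g = p ^ n) :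
    ∃ P : Sylow p G, g ∈ P :=
  let ⟨P, hP⟩ := (IsPGroup.of_card ((Nat.card_zpowers g).trans hg)).exists_le_sylow
  ⟨P, hP (mem_zpowers g)⟩

section PrimeOrderSylow

variable {p : ℕ} [Fact p.Prime]

theorem Sylow.card_eq_of_card_eq_mul [Finite G] {m : ℕ} (hG : Nat.card G = p * m)
    (hm : ¬ p ∣ m) (P : Sylow p G) : Nat.card P = p := by
  have hm0 : m ≠ 0 := by rintro rfl; exact hm (dvd_zero p)
  rw [P.card_eq_multiplicity, hG, Nat.factorization_mul (Fact.out : p.Prime).ne_zero hm0,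
    Finsupp.add_apply, (Fact.out : p.Prime).factorization_self,
    Nat.factorization_eq_zero_of_not_dvd hm, pow_one]

theorem Sylow.eq_of_mem_of_card_eq_prime (hcard : ∀ P : Sylow p G, Nat.card P = p) {g : G}
    (hg : g ≠ 1) {P Q : Sylow p G} (hP : g ∈ P) (hQ : g ∈ Q) : P = Q :=
  Sylow.ext <| (eq_zpowers_of_card_eq_prime Fact.out (hcard P) hP hg).trans
    (eq_zpowers_of_card_eq_prime Fact.out (hcard Q) hQ hg).symm

theorem lam_eq_one_of_card_sylow_eq_prime (hcard : ∀ P : Sylow p G, Nat.card P = p) {x : G}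
    (hx : x ≠ 1) (hxp : ∃ n : ℕ, orderOf x = p ^ n) : lam p x = 1 := by
  obtain ⟨n, hn⟩ := hxp
  obtain ⟨P, hP⟩ := Sylow.exists_mem_of_orderOf_eq_prime_pow hn
  rw [lam, Nat.card_eq_one_iff_unique]
  exact ⟨⟨fun P Q ↦ Subtype.ext (Sylow.eq_of_mem_of_card_eq_prime hcard hx P.2 Q.2)⟩, ⟨⟨P, hP⟩⟩⟩

theorem pCore_eq_bot_of_card_sylow_eq_prime (hcard : ∀ P : Sylow p G, Nat.card P = p)
    [Nontrivial (Sylow p G)] : pCore p G = ⊥ := by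
  obtain ⟨P, Q, hPQ⟩ := exists_pair_ne (Sylow p G)
  refine eq_bot_iff.mpr fun g hg ↦ mem_bot.mpr ?_
  by_contra hg1
  exact hPQ (Sylow.eq_of_mem_of_card_eq_prime hcard hg1 (mem_iInf.mp hg P) (mem_iInf.mp hg Q))

theorem Sylow.nontrivial_of_conj_notMem_zpowers (hcard : ∀ P : Sylow p G, Nat.card P = p)
    {g s : G} (hg : orderOf g = p) (hs : s * g * s⁻¹ ∉ zpowers g) : Nontrivial (Sylow p G) := by
  have hg1 : g ≠ 1 := fun h ↦ (Fact.out : p.Prime).one_lt.ne' (by rw [← hg, h, orderOf_one])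
  obtain ⟨P, hP⟩ := Sylow.exists_mem_of_orderOf_eq_prime_pow (hg.trans (pow_one p).symm)
  obtain ⟨Q, hQ⟩ := Sylow.exists_mem_of_orderOf_eq_prime_pow
    (((MulAut.conj s).orderOf_eq g).trans (hg.trans (pow_one p).symm))
  refine ⟨P, Q, fun hPQ ↦ hs ?_⟩
  rw [← eq_zpowers_of_card_eq_prime Fact.out (hcard P) hP hg1, hPQ]
  exact hQ

theorem np_eq_add_one_of_card_eq_mul [Finite G] [Nontrivial (Sylow p G)] {m : ℕ}
    (hG : Nat.card G = p * m) (hm : m ∣ p ^ 2 - 1) : np p G = p + 1 := by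
  have hp := (Fact.out : p.Prime)
  have hpm := Nat.not_dvd_of_dvd_sq_sub_one hp.one_lt hm
  obtain ⟨P⟩ : Nonempty (Sylow p G) := inferInstance
  have hidx : (P : Subgroup G).index = m := by
    have h := (P : Subgroup G).card_mul_index
    rw [Sylow.card_eq_of_card_eq_mul hG hpm P, hG] at h
    exact Nat.eq_of_mul_eq_mul_left hp.pos h
  have hdvd : np p G ∣ p ^ 2 - 1 := (hidx ▸ P.card_dvd_index).trans hm
  refine (Nat.eq_one_or_eq_add_one_of_dvd_sq_sub_one hp.one_lt hdvd
    (card_sylow_modEq_one p G)).resolve_left ?_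
  exact (Finite.one_lt_card_iff_nontrivial.mpr ‹_›).ne'

end PrimeOrderSylow

open Matrix ModularGroup
open scoped MatrixGroups

namespace Matrix.SpecialLinearGroup

variable {n R : Type*} [Fintype n] [DecidableEq n] [CommRing R]

theorem card_mul_card_units [Nonempty n] :
    Nat.card (SpecialLinearGroup n R) * Nat.card Rˣ = Nat.card (GL n R) := by
  have h := (GeneralLinearGroup.det : GL n R →* Rˣ).ker.card_mul_index
  have hker : Nat.card (GeneralLinearGroup.det : GL n R →* Rˣ).ker =
      Nat.card (SpecialLinearGroup n R) := by
    rw [← Nat.card_range_of_injective toGL_injective, range_toGL]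
    rfl
  rwa [index_ker, MonoidHom.range_eq_top.mpr GeneralLinearGroup.det_surjective, card_top,
    hker] at h

theorem apply_eq_zero_of_mem_center {A : SpecialLinearGroup n R} (hA : A ∈ center _)
    {i j : n} (hij : i ≠ j) : A i j = 0 := by
  obtain ⟨r, -, hr⟩ := mem_center_iff.mp hA
  rw [← hr, scalar_apply, diagonal_apply_ne _ hij]

theorem card_center_fin_two [IsDomain R] (hR : ringChar R ≠ 2) :
    Nat.card (center SL(2, R)) = 2 := by
  rw [Nat.card_congr (center_equiv_rootsOfUnity' 0).toEquiv, Fintype.card_fin]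
  exact (IsPrimitiveRoot.neg_one (ringChar R) hR).card_rootsOfUnity

theorem card_fin_two_zmod (p : ℕ) [Fact p.Prime] : Nat.card SL(2, ZMod p) = p * (p ^ 2 - 1) := by
  have hp := (Fact.out : p.Prime)
  have h := card_mul_card_units (n := Fin 2) (R := ZMod p)
  rw [card_GL_field, Nat.card_eq_fintype_card (α := (ZMod p)ˣ), ZMod.card_units, ZMod.card,
    Fin.prod_univ_two, Fin.val_zero, Fin.val_one, pow_zero, pow_one,
    show p ^ 2 - p = p * (p - 1) by rw [Nat.mul_sub_one, sq]] at h
  refine Nat.eq_of_mul_eq_mul_right (Nat.sub_pos_of_lt hp.one_lt) ?_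
  rw [h]
  ring

end Matrix.SpecialLinearGroup

namespace Matrix.ProjectiveSpecialLinearGroup

variable (p : ℕ) [Fact p.Prime]

theorem exists_card_fin_two_zmod_eq_mul (hp : p ≠ 2) :
    ∃ m, Nat.card PSL(2, ZMod p) = p * m ∧ m ∣ p ^ 2 - 1 := by
  have h : 2 * Nat.card PSL(2, ZMod p) = p * (p ^ 2 - 1) := by
    rw [← SpecialLinearGroup.card_fin_two_zmod, ← (center SL(2, ZMod p)).card_mul_index,
      SpecialLinearGroup.card_center_fin_two (by rwa [ZMod.ringChar_zmod_n]), index_eq_card]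
  have hpN : p ∣ Nat.card PSL(2, ZMod p) :=
    ((Fact.out : p.Prime).dvd_mul.mp (h ▸ dvd_mul_right p _)).resolve_left
      fun h2 ↦ hp ((Nat.prime_dvd_prime_iff_eq Fact.out Nat.prime_two).mp h2)
  obtain ⟨m, hm⟩ := hpN
  refine ⟨m, hm, Dvd.intro_left 2 ?_⟩
  rw [hm, mul_left_comm] at h
  exact Nat.eq_of_mul_eq_mul_left (Fact.out : p.Prime).pos h

noncomputable def reduceMod : SL(2, ℤ) →* PSL(2, ZMod p) :=
  (QuotientGroup.mk' _).comp (SpecialLinearGroup.map (Int.castRingHom (ZMod p)))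

variable {p}

theorem intCast_apply_eq_zero_of_reduceMod_eq_one {g : SL(2, ℤ)} (hg : reduceMod p g = 1)
    {i j : Fin 2} (hij : i ≠ j) : ((g i j : ℤ) : ZMod p) = 0 :=
  SpecialLinearGroup.apply_eq_zero_of_mem_center ((QuotientGroup.eq_one_iff _).mp hg) hij

variable (p)

theorem orderOf_reduceMod_T : orderOf (reduceMod p T) = p := by
  have hTp : SpecialLinearGroup.map (Int.castRingHom (ZMod p)) (T ^ (p : ℤ)) = 1 := by
    ext i j
    rw [SpecialLinearGroup.map_apply_coe, RingHom.mapMatrix_apply, map_apply, coe_T_zpow]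
    fin_cases i <;> fin_cases j <;> simp
  refine orderOf_eq_prime ?_ fun h ↦ ?_
  · rw [← map_pow, ← zpow_natCast, reduceMod, MonoidHom.comp_apply, hTp, map_one]
  · simpa using intCast_apply_eq_zero_of_reduceMod_eq_one h zero_ne_one

theorem reduceMod_conj_T_notMem_zpowers :
    reduceMod p S * reduceMod p T * (reduceMod p S)⁻¹ ∉ zpowers (reduceMod p T) := by
  rintro ⟨k, hk⟩
  have h : reduceMod p ((T ^ k)⁻¹ * (S * T * S⁻¹)) = 1 := by
    rw [map_mul, map_inv, map_zpow, map_mul, map_mul, map_inv, ← hk, inv_mul_cancel]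
  have hentry : ((T ^ k)⁻¹ * (S * T * S⁻¹)) 1 0 = -1 := by
    rw [← _root_.zpow_neg, S_inv]
    simp [coe_T_zpow]
  have := intCast_apply_eq_zero_of_reduceMod_eq_one h one_ne_zero
  rw [hentry, Int.cast_neg, Int.cast_one, neg_eq_zero] at this
  exact one_ne_zero this

end Matrix.ProjectiveSpecialLinearGroup

open Matrix in
theorem stmt9 (p : ℕ) [Fact p.Prime] (hp : 5 ≤ p)
    (x : ProjectiveSpecialLinearGroup (Fin 2) (ZMod p)) (hx : x ≠ 1)
    (hxp : ∃ n : ℕ, orderOf x = p ^ n) :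
    (lam p x : ℚ) / (np p (ProjectiveSpecialLinearGroup (Fin 2) (ZMod p)) : ℚ)
        = 1 / (p + 1) ∧
      pCore p (ProjectiveSpecialLinearGroup (Fin 2) (ZMod p)) = ⊥ := by
  obtain ⟨m, hG, hm⟩ := ProjectiveSpecialLinearGroup.exists_card_fin_two_zmod_eq_mul p (by omega)
  have hcard := Sylow.card_eq_of_card_eq_mul hG
    (Nat.not_dvd_of_dvd_sq_sub_one (Fact.out : p.Prime).one_lt hm)
  have := Sylow.nontrivial_of_conj_notMem_zpowers hcard
    (ProjectiveSpecialLinearGroup.orderOf_reduceMod_T p)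
    (ProjectiveSpecialLinearGroup.reduceMod_conj_T_notMem_zpowers p)
  refine ⟨?_, pCore_eq_bot_of_card_sylow_eq_prime hcard⟩
  rw [lam_eq_one_of_card_sylow_eq_prime hcard hx hxp, np_eq_add_one_of_card_eq_mul hG hm]
  push_cast
  ring
end

section
/- Let G be a finite group and x ∈ G with ⟨x⟩ subnormal in G. If x = x_p·x_{p'} is the decomposition of x into its p-part and p'-part, then ⟨x_p⟩ is subnormal in G and x_p ∈ O_p(G). -/
/-!
Since `x_p` is a power of `x`, the subgroup `⟨x_p⟩` is normal in the abelian subnormal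
subgroup `⟨x⟩`, hence subnormal in `G`. A subnormal `p`-subgroup `H` lies in `O_p(G)` by induction
on `|G|`: if `H ≠ G`, then `H` lies in a proper normal subgroup `K` in which it is still subnormal,
so `H ≤ O_p(K)`; and `O_p(K)`, being characteristic in `K`, is a normal `p`-subgroup of `G`,
hence contained in every Sylow `p`-subgroup.
-/

open Subgroup

variable {G : Type*} [Group G]

theorem subnormal_top_iff_isSubnormal {H : Subgroup G} : Subnormal H ⊤ ↔ H.IsSubnormal := by
  constructor
  · rintro ⟨n, c, rfl, hn, hc⟩
    induction n generalizing c with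
    | zero => exact hn ▸ .top
    | succ n ih =>
      obtain ⟨hle, hconj⟩ := hc 0 n.succ_pos
      refine .step _ _ hle (ih (fun i => c (i + 1)) hn fun i hi => hc (i + 1) (by omega)) ?_
      exact (normal_subgroupOf_iff hle).2 fun h k hh hk => hconj k hk h hh
  · intro hH
    induction hH with
    | top => exact ⟨0, fun _ => ⊤, rfl, rfl, by simp⟩
    | step H K hHK _ hN ih =>
      obtain ⟨n, c, rfl, hn, hc⟩ := ih
      refine ⟨n + 1, fun | 0 => H | i + 1 => c i, rfl, hn, ?_⟩
      rintro (_ | i) hi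
      · exact ⟨hHK, fun k hk h hh => (normal_subgroupOf_iff hHK).1 hN h k hh hk⟩
      · exact hc i (by omega)

section PCore

variable {p : ℕ} [Fact p.Prime]

theorem IsPGroup.le_pCore {N : Subgroup G} [N.Normal] (hN : IsPGroup p N) : N ≤ pCore p G :=
  le_iInf hN.le_sylow_of_normal

theorem isPGroup_pCore [Finite G] : IsPGroup p (pCore p G) :=
  have ⟨P⟩ : Nonempty (Sylow p G) := inferInstance
  P.isPGroup'.to_le (iInf_le _ P)

instance pCore_characteristic : (pCore p G).Characteristic :=
  characteristic_iff_le_comap.2 fun φ _ hg => mem_iInf.2 fun P => mem_iInf.1 hg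
    (P.comapOfInjective φ.toMonoidHom φ.injective fun g _ => ⟨φ.symm g, φ.apply_symm_apply g⟩)

theorem Subgroup.IsSubnormal.le_pCore [Finite G] {H : Subgroup G} (hH : H.IsSubnormal)
    (hp : IsPGroup p H) : H ≤ pCore p G := by
  induction hcard : Nat.card G using Nat.strong_induction_on generalizing G with
  | _ n ih =>
    obtain rfl | ⟨K, hK, hHK, hKlt⟩ := hH.lt_normal
    · exact hp.le_pCore
    have hcardK : Nat.card K < n := hcard ▸ (card_le_card_group K).lt_of_ne
      (mt (card_eq_iff_eq_top K).1 hKlt.ne)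
    have hH_le : H.subgroupOf K ≤ pCore p K :=
      ih _ hcardK hH.subgroupOf hp.comap_subtype rfl
    calc H = (H.subgroupOf K).map K.subtype := (map_subgroupOf_eq_of_le hHK).symm
      _ ≤ (pCore p K).map K.subtype := map_mono hH_le
      _ ≤ pCore p G := (isPGroup_pCore.map K.subtype).le_pCore

end PCore

theorem stmt11_general [Finite G] (p : ℕ) [Fact p.Prime] (x xp : G)
    (hsub : Subnormal (zpowers x) ⊤)
    (hxp : xp ∈ zpowers x)
    (hordp : ∃ a : ℕ, orderOf xp = p ^ a) :
    Subnormal (zpowers xp) ⊤ ∧ xp ∈ pCore p G := by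
  have hsn : (zpowers xp).IsSubnormal :=
    IsSubnormal.trans (zpowers_le.2 hxp) (normal_of_isMulCommutative _).isSubnormal
      (subnormal_top_iff_isSubnormal.1 hsub)
  obtain ⟨a, ha⟩ := hordp
  have hp : IsPGroup p (zpowers xp) := IsPGroup.of_card (by rw [Nat.card_zpowers, ha])
  exact ⟨subnormal_top_iff_isSubnormal.2 hsn, hsn.le_pCore hp (mem_zpowers xp)⟩

theorem stmt11 [Finite G] (p : ℕ) [Fact p.Prime] (x xp xq : G)
    (hsub : Subnormal (zpowers x) ⊤)
    (hmul : x = xp * xq) (hcomm : Commute xp xq)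
    (hxp : xp ∈ zpowers x) (hxq : xq ∈ zpowers x)
    (hordp : ∃ a : ℕ, orderOf xp = p ^ a) (hordq : ¬ p ∣ orderOf xq) :
    Subnormal (zpowers xp) ⊤ ∧ xp ∈ pCore p G :=
  stmt11_general p x xp hsub hxp hordp
end

section
/- Let G be a finite Frobenius group G = N ⋊ ⟨x⟩ where N is elementary abelian of order p^k, |x| = q prime, q ≠ p, and C_N(x) = 1. Then dn(G) = 1/(p^k q) + (p^k − 1)/(p^k q²) + (q−1)/(p^k q), and for 1 ≠ a ∈ N one has Nil_G(a) = N, while for y ∉ N one has Nil_G(y) = ⟨y⟩. -/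
open Subgroup

/-!
Two elements of coprime prime-power orders commute in a finite nilpotent group, whose Sylow
subgroups are normal. In `G = N ⋊ ⟨x⟩` no nontrivial `a ∈ N` commutes with an element `n x^m`
outside `N`: as `N` is abelian, `a` would commute with `x^m`, hence with `x` since `q ∤ m`.
So a nilpotent subgroup never meets both `N \ {1}` and `G \ N`. Thus for `1 ≠ a ∈ N`, `⟨a, z⟩`
is nilpotent iff `z ∈ N` (a `p`-group); and for `y ∉ N` a nilpotent `⟨y, z⟩` meets `N`
trivially, so its order divides `|G : N| = q` and it is `⟨y⟩`. Summing `|Nil_G(g)|` over `1`,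
`N \ {1}` and `G \ N` gives `p^k q + (p^k - 1) p^k + (p^k q - p^k) q`.
-/

/-- The degree of nilpotence of a group: the probability that two random
elements generate a nilpotent subgroup. -/
noncomputable def dn (G : Type*) [Group G] : ℚ :=
  (Nat.card {p : G × G // Group.IsNilpotent ↥(closure ({p.1, p.2} : Set G))} : ℚ) /
    (Nat.card G : ℚ) ^ 2

/-- `Nil_G(x)`: the set of `y` such that `⟨x, y⟩` is nilpotent. -/
def NilSet {G : Type*} [Group G] (x : G) : Set G :=
  {y : G | Group.IsNilpotent ↥(closure ({x, y} : Set G))}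

namespace Subgroup

variable {G : Type*} [Group G]

theorem isNilpotent_of_le {H K : Subgroup G} (hle : H ≤ K) [Group.IsNilpotent K] :
    Group.IsNilpotent H :=
  Group.nilpotent_of_mulEquiv (subgroupOfEquivOfLe hle)

instance isNilpotent_zpowers (y : G) : Group.IsNilpotent (zpowers y) :=
  letI := IsCyclic.commGroup (α := zpowers y)
  CommGroup.isNilpotent

theorem commute_of_isNilpotent [Finite G] {K : Subgroup G} [Group.IsNilpotent K]
    {p q m n : ℕ} [Fact p.Prime] [Fact q.Prime] (hpq : p ≠ q) {a b : G}
    (haK : a ∈ K) (hbK : b ∈ K) (ha : orderOf a = p ^ m) (hb : orderOf b = q ^ n) :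
    Commute a b := by
  have hA : IsPGroup p (zpowers (⟨a, haK⟩ : K)) :=
    IsPGroup.of_card (by rw [Nat.card_zpowers, orderOf_mk, ha])
  have hB : IsPGroup q (zpowers (⟨b, hbK⟩ : K)) :=
    IsPGroup.of_card (by rw [Nat.card_zpowers, orderOf_mk, hb])
  obtain ⟨P, hP⟩ := hA.exists_le_sylow
  obtain ⟨Q, hQ⟩ := hB.exists_le_sylow
  have hcomm := commute_of_normal_of_disjoint (P : Subgroup K) Q inferInstance inferInstance
    (IsPGroup.disjoint_of_ne p q hpq _ _ P.isPGroup' Q.isPGroup') _ _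
    (hP (mem_zpowers _)) (hQ (mem_zpowers _))
  exact congrArg Subtype.val hcomm

theorem card_dvd_index_of_inf_eq_bot {N H : Subgroup G} [N.Normal] (h : N ⊓ H = ⊥) :
    Nat.card H ∣ N.index := by
  rw [← relIndex_bot_left, ← h, inf_relIndex_right]
  exact relIndex_dvd_index_of_normal N H

theorem sum_eq_of_eq_on_mem_of_eq_on_notMem {R : Type*} [Fintype G] [CommRing R]
    (N : Subgroup G) {f : G → R} {B C : R} (hN : ∀ g ∈ N, g ≠ 1 → f g = B)
    (hNc : ∀ g ∉ N, f g = C) :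
    ∑ g, f g = f 1 + ((Nat.card N : R) - 1) * B + ((Nat.card G : R) - Nat.card N) * C := by
  classical
  set s := (N : Set G).toFinset
  have h1 : (1 : G) ∈ s := by simp [s]
  have hs : s.card = Nat.card N := by simp [s, Nat.card_eq_fintype_card]
  rw [← Finset.sum_add_sum_compl s, ← Finset.add_sum_erase _ _ h1,
    Finset.sum_congr rfl fun g hg => hN g (by simpa [s] using Finset.mem_of_mem_erase hg)
      (Finset.ne_of_mem_erase hg),
    Finset.sum_congr rfl fun g hg => hNc g (by simpa [s] using hg),
    Finset.sum_const, Finset.sum_const, Finset.card_erase_of_mem h1, Finset.card_compl,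
    nsmul_eq_mul, nsmul_eq_mul, Nat.cast_sub (Finset.card_pos.2 ⟨1, h1⟩),
    Nat.cast_sub (Finset.card_le_univ s), hs, Nat.cast_one, Nat.card_eq_fintype_card (α := G)]

end Subgroup

section NilSet

variable {G : Type*} [Group G]

theorem mem_nilSet_comm {a b : G} : b ∈ NilSet a ↔ a ∈ NilSet b := by
  show Group.IsNilpotent (closure {a, b}) ↔ Group.IsNilpotent (closure {b, a})
  rw [Set.pair_comm]

theorem mem_nilSet_of_mem_zpowers {y z : G} (hz : z ∈ zpowers y) : z ∈ NilSet y :=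
  isNilpotent_of_le ((closure_le _).mpr (Set.pair_subset (mem_zpowers y) hz))

theorem nilSet_one : NilSet (1 : G) = Set.univ :=
  Set.eq_univ_of_forall fun _ => mem_nilSet_comm.mp (mem_nilSet_of_mem_zpowers (one_mem _))

theorem IsPGroup.mem_nilSet [Finite G] {p : ℕ} [Fact p.Prime] {N : Subgroup G}
    (hN : IsPGroup p N) {a b : G} (ha : a ∈ N) (hb : b ∈ N) : b ∈ NilSet a :=
  haveI := hN.isNilpotent
  isNilpotent_of_le ((closure_le _).mpr (Set.pair_subset ha hb))

theorem dn_eq_sum_card_nilSet [Fintype G] :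
    dn G = (∑ g : G, (Nat.card (NilSet g) : ℚ)) / (Nat.card G : ℚ) ^ 2 := by
  have e : {p : G × G // Group.IsNilpotent (closure ({p.1, p.2} : Set G))} ≃ Σ a : G, NilSet a :=
    Equiv.subtypeProdEquivSigmaSubtype fun a b : G => b ∈ NilSet a
  rw [dn, Nat.card_congr e, Nat.card_sigma, Nat.cast_sum]

end NilSet

/-- `G = N ⋊ ⟨x⟩` is a Frobenius group with abelian kernel `N` and complement `⟨x⟩` of prime
order. -/
structure IsAbelianFrobeniusKernel {G : Type*} [Group G] (N : Subgroup G) (x : G) : Prop where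
  normal : N.Normal
  comm : ∀ a ∈ N, ∀ b ∈ N, a * b = b * a
  prime_orderOf : (orderOf x).Prime
  inf_eq_bot : N ⊓ zpowers x = ⊥
  sup_eq_top : N ⊔ zpowers x = ⊤
  conj_ne : ∀ a ∈ N, a ≠ 1 → x * a * x⁻¹ ≠ a

namespace IsAbelianFrobeniusKernel

variable {G : Type*} [Group G] {N : Subgroup G} {x : G}

theorem exists_mem_mul_pow [Finite G] (hF : IsAbelianFrobeniusKernel N x) (g : G) :
    ∃ n ∈ N, ∃ m : ℕ, g = n * x ^ m := by
  have := hF.normal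
  have hg : g ∈ ((N ⊔ zpowers x : Subgroup G) : Set G) := by rw [hF.sup_eq_top]; trivial
  rw [normal_mul] at hg
  obtain ⟨n, hn, y, hy, rfl⟩ := hg
  obtain ⟨m, rfl⟩ := mem_powers_iff_mem_zpowers.mpr hy
  exact ⟨n, hn, m, rfl⟩

theorem eq_one_of_commute_pow (hF : IsAbelianFrobeniusKernel N x) {m : ℕ}
    (hm : m.Coprime (orderOf x)) {a : G} (ha : a ∈ N) (hcomm : Commute a (x ^ m)) : a = 1 := by
  obtain ⟨u, hu⟩ := exists_pow_eq_self_of_coprime hm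
  have hax : Commute a x := hu ▸ hcomm.pow_right u
  by_contra hne
  exact hF.conj_ne a ha hne (by rw [← hax.eq, mul_inv_cancel_right])

theorem eq_one_of_commute_of_notMem [Finite G] (hF : IsAbelianFrobeniusKernel N x) {g : G}
    (hg : g ∉ N) {a : G} (ha : a ∈ N) (hcomm : Commute a g) : a = 1 := by
  obtain ⟨n, hn, m, rfl⟩ := hF.exists_mem_mul_pow g
  have hm : ¬ orderOf x ∣ m := by
    rintro ⟨c, rfl⟩
    rw [pow_mul, pow_orderOf_eq_one, one_pow, mul_one] at hg
    exact hg hn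
  have hcomm' : Commute a (x ^ m) := by
    have hna : Commute a n := hF.comm a ha n hn
    simpa using hna.inv_right.mul_right hcomm
  exact hF.eq_one_of_commute_pow (hF.prime_orderOf.coprime_iff_not_dvd.mpr hm).symm ha hcomm'

theorem index_eq_orderOf (hF : IsAbelianFrobeniusKernel N x) : N.index = orderOf x := by
  have := hF.normal
  have hcompl : IsComplement' (zpowers x) N :=
    isComplement'_of_disjoint_and_mul_eq_univ (disjoint_iff.mpr (inf_comm N _ ▸ hF.inf_eq_bot))
      (by rw [← mul_normal, sup_comm, hF.sup_eq_top, coe_top])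
  rw [hcompl.index_eq_card, Nat.card_zpowers]

theorem orderOf_eq_of_notMem [Finite G] (hF : IsAbelianFrobeniusKernel N x) {g : G}
    (hg : g ∉ N) : orderOf g = orderOf x := by
  have := hF.normal
  have hpow : g ^ orderOf x ∈ N := hF.index_eq_orderOf ▸ N.pow_index_mem g
  have h1 : g ^ orderOf x = 1 :=
    hF.eq_one_of_commute_of_notMem hg hpow ((Commute.refl g).pow_left _)
  refine (hF.prime_orderOf.eq_one_or_self_of_dvd _ (orderOf_dvd_of_pow_eq_one h1)).resolve_left ?_
  rintro h
  exact hg (orderOf_eq_one_iff.mp h ▸ N.one_mem)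

theorem eq_one_of_mem_of_isNilpotent [Finite G] (hF : IsAbelianFrobeniusKernel N x) {p : ℕ}
    [Fact p.Prime] (hN : IsPGroup p N) (hp : p ≠ orderOf x) {K : Subgroup G}
    [Group.IsNilpotent K] {a g : G} (haK : a ∈ K) (hgK : g ∈ K) (ha : a ∈ N) (hg : g ∉ N) :
    a = 1 := by
  have := Fact.mk hF.prime_orderOf
  obtain ⟨m, hm⟩ := IsPGroup.iff_orderOf.mp hN ⟨a, ha⟩
  have hcomm : Commute a g := commute_of_isNilpotent hp haK hgK (n := 1)
    (by rw [← orderOf_mk a ha, hm]) (by rw [pow_one, hF.orderOf_eq_of_notMem hg])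
  exact hF.eq_one_of_commute_of_notMem hg ha hcomm

theorem nilSet_eq_of_mem [Finite G] (hF : IsAbelianFrobeniusKernel N x) {p : ℕ}
    [Fact p.Prime] (hN : IsPGroup p N) (hp : p ≠ orderOf x) {a : G} (ha : a ∈ N)
    (ha1 : a ≠ 1) : NilSet a = N := by
  ext z
  refine ⟨fun hz => ?_, hN.mem_nilSet ha⟩
  by_contra hzN
  have : Group.IsNilpotent (closure {a, z}) := hz
  exact ha1 (hF.eq_one_of_mem_of_isNilpotent hN hp (subset_closure (Set.mem_insert a {z}))
    (subset_closure (Set.mem_insert_of_mem a rfl)) ha hzN)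

theorem nilSet_eq_zpowers_of_notMem [Finite G] (hF : IsAbelianFrobeniusKernel N x) {p : ℕ}
    [Fact p.Prime] (hN : IsPGroup p N) (hp : p ≠ orderOf x) {y : G} (hy : y ∉ N) :
    NilSet y = zpowers y := by
  ext z
  refine ⟨fun hz => ?_, mem_nilSet_of_mem_zpowers⟩
  set K := closure ({y, z} : Set G)
  have : Group.IsNilpotent K := hz
  have hyK : y ∈ K := subset_closure (Set.mem_insert y {z})
  have hNK : N ⊓ K = ⊥ := eq_bot_iff.mpr fun w hw =>
    hF.eq_one_of_mem_of_isNilpotent hN hp hw.2 hyK hw.1 hy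
  have := hF.normal
  have hKq : Nat.card K ≤ orderOf y := by
    rw [hF.orderOf_eq_of_notMem hy]
    exact Nat.le_of_dvd hF.prime_orderOf.pos
      (hF.index_eq_orderOf ▸ card_dvd_index_of_inf_eq_bot hNK)
  have hyz : zpowers y = K :=
    eq_of_le_of_card_ge (zpowers_le.mpr hyK) (by rwa [Nat.card_zpowers])
  exact hyz ▸ subset_closure (Set.mem_insert_of_mem y rfl)

end IsAbelianFrobeniusKernel

theorem stmt14_general {G : Type*} [Group G] [Finite G] (N : Subgroup G) (hNn : N.Normal)
    (p q k : ℕ) (hp : p.Prime) (hq : q.Prime) (hpq : p ≠ q)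
    (hcard : Nat.card N = p ^ k)
    (habel : ∀ a ∈ N, ∀ b ∈ N, a * b = b * a)
    (x : G) (hordx : orderOf x = q)
    (hint : N ⊓ zpowers x = ⊥) (hgen : N ⊔ zpowers x = ⊤)
    (hfpf : ∀ a ∈ N, a ≠ 1 → x * a * x⁻¹ ≠ a) :
    (∀ a ∈ N, a ≠ 1 → NilSet a = (N : Set G)) ∧
    (∀ y : G, y ∉ N → NilSet y = (zpowers y : Set G)) ∧
    dn G = 1 / ((p : ℚ) ^ k * q) + ((p : ℚ) ^ k - 1) / ((p : ℚ) ^ k * q ^ 2)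
      + ((q : ℚ) - 1) / ((p : ℚ) ^ k * q) := by
  have := Fact.mk hp
  have hF : IsAbelianFrobeniusKernel N x := ⟨hNn, habel, hordx ▸ hq, hint, hgen, hfpf⟩
  have hN : IsPGroup p N := IsPGroup.of_card hcard
  have hpx : p ≠ orderOf x := hordx ▸ hpq
  have hcardG : Nat.card G = p ^ k * q := by
    rw [← N.card_mul_index, hF.index_eq_orderOf, hcard, hordx]
  have hNilN : ∀ a ∈ N, a ≠ 1 → (Nat.card (NilSet a) : ℚ) = p ^ k := fun a ha ha1 => by
    rw [hF.nilSet_eq_of_mem hN hpx ha ha1, SetLike.coe_sort_coe, hcard, Nat.cast_pow]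
  have hNilG : ∀ y ∉ N, (Nat.card (NilSet y) : ℚ) = q := fun y hy => by
    rw [hF.nilSet_eq_zpowers_of_notMem hN hpx hy, SetLike.coe_sort_coe, Nat.card_zpowers,
      hF.orderOf_eq_of_notMem hy, hordx]
  refine ⟨fun a ha ha1 => hF.nilSet_eq_of_mem hN hpx ha ha1,
    fun y hy => hF.nilSet_eq_zpowers_of_notMem hN hpx hy, ?_⟩
  have := Fintype.ofFinite G
  rw [dn_eq_sum_card_nilSet, N.sum_eq_of_eq_on_mem_of_eq_on_notMem hNilN hNilG, nilSet_one,
    Nat.card_univ, hcardG, hcard]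
  have hp0 : (p : ℚ) ^ k ≠ 0 := pow_ne_zero k (Nat.cast_ne_zero.mpr hp.ne_zero)
  have hq0 : (q : ℚ) ≠ 0 := Nat.cast_ne_zero.mpr hq.ne_zero
  push_cast
  field_simp

theorem stmt14 {G : Type*} [Group G] [Finite G] (N : Subgroup G) (hNn : N.Normal)
    (p q k : ℕ) (hp : p.Prime) (hq : q.Prime) (hpq : p ≠ q) (hk : 1 ≤ k)
    (hcard : Nat.card N = p ^ k)
    (helem : ∀ a ∈ N, a ^ p = 1) (habel : ∀ a ∈ N, ∀ b ∈ N, a * b = b * a)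
    (x : G) (hordx : orderOf x = q)
    (hint : N ⊓ zpowers x = ⊥) (hgen : N ⊔ zpowers x = ⊤)
    (hfpf : ∀ a ∈ N, a ≠ 1 → x * a * x⁻¹ ≠ a) :
    (∀ a ∈ N, a ≠ 1 → NilSet a = (N : Set G)) ∧
    (∀ y : G, y ∉ N → NilSet y = (zpowers y : Set G)) ∧
    dn G = 1 / ((p : ℚ) ^ k * q) + ((p : ℚ) ^ k - 1) / ((p : ℚ) ^ k * q ^ 2)
      + ((q : ℚ) - 1) / ((p : ℚ) ^ k * q) :=
  stmt14_general N hNn p q k hp hq hpq hcard habel x hordx hint hgen hfpf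
end
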